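/- For every f ∈ L^p(γ_d), 1 ≤ p < ∞, and almost every x ∈ ℝ^d, P_t f(y) → f(x) as (y,t) → (x,0) with (y,t) in the Gaussian cone Γ_γ(x) = {(y,t) ∈ ℝ^{d+1}_+ : |y−x| < t ∧ (1/|x|) ∧ 1}, assuming the non-tangential maximal function 𝒫*_γ f(x) = sup_{(y,t)∈Γ_γ(x)} |P_t f(y)| is of weak type (1,1) with respect to γ_d. -/

import Mathlib

open Real MeasureTheory Filter Topology ENNReal NNReal

/-- The Gaussian measure `γ_d` on `ℝ^d`, with density `π^{-d/2} e^{-|x|²}`. -/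
noncomputable def gaussianMeasure (d : ℕ) : Measure (EuclideanSpace ℝ (Fin d)) :=
  volume.withDensity fun x => ENNReal.ofReal (π ^ (-(d:ℝ)/2) * Real.exp (-‖x‖ ^ 2))

/-- The Ornstein-Uhlenbeck (Mehler) semigroup. -/
noncomputable def ouSemigroup {d : ℕ} (t : ℝ) (f : EuclideanSpace ℝ (Fin d) → ℝ)
    (x : EuclideanSpace ℝ (Fin d)) : ℝ :=
  π ^ (-(d:ℝ)/2) * (1 - Real.exp (-2*t)) ^ (-(d:ℝ)/2) *
    ∫ y, Real.exp (-‖y - Real.exp (-t) • x‖ ^ 2 / (1 - Real.exp (-2*t))) * f y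

/-- The Poisson-Hermite semigroup, defined by Bochner subordination. -/
noncomputable def poissonHermite {d : ℕ} (t : ℝ) (f : EuclideanSpace ℝ (Fin d) → ℝ)
    (x : EuclideanSpace ℝ (Fin d)) : ℝ :=
  (1 / Real.sqrt π) *
    ∫ u in Set.Ioi (0:ℝ), (Real.exp (-u) / Real.sqrt u) * ouSemigroup (t^2/(4*u)) f x

/-- The gaussian cone `Γ_γ(x)`. -/
def gaussianCone {d : ℕ} (x : EuclideanSpace ℝ (Fin d)) :
    Set ((EuclideanSpace ℝ (Fin d)) × ℝ) :=
  {p | 0 < p.2 ∧ ‖p.1 - x‖ < min (min p.2 (1 / ‖x‖)) 1}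

/-- The non-tangential maximal function of the Poisson-Hermite semigroup. -/
noncomputable def phNTMaximal {d : ℕ} (f : EuclideanSpace ℝ (Fin d) → ℝ)
    (x : EuclideanSpace ℝ (Fin d)) : ℝ≥0∞ :=
  ⨆ p ∈ gaussianCone x, ENNReal.ofReal |poissonHermite p.2 f p.1|

namespace PHproof

variable {d : ℕ}

local notation "E" => EuclideanSpace ℝ (Fin d)

/-- Integrability of the standard Gaussian on Euclidean space. -/
lemma integrable_gauss : Integrable (fun z : E => rexp (-‖z‖ ^ 2)) volume := by
  have h := (GaussianFourier.integrable_cexp_neg_mul_sq_norm_add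
    (b := 1) (by norm_num) 0 (0 : E)).norm
  apply h.congr
  filter_upwards with v
  rw [Complex.norm_exp]
  norm_num [← Complex.ofReal_pow]

lemma integral_gauss : ∫ z : E, rexp (-‖z‖ ^ 2) = π ^ ((d:ℝ)/2) := by
  have h := GaussianFourier.integral_rexp_neg_mul_sq_norm (V := E) (b := 1) one_pos
  simp only [neg_mul, one_mul, div_one, finrank_euclideanSpace_fin] at h
  exact h

lemma gc_pos : 0 < π ^ (-(d:ℝ)/2) := Real.rpow_pos_of_pos Real.pi_pos _

lemma gc_mul_gauss : π ^ (-(d:ℝ)/2) * π ^ ((d:ℝ)/2) = 1 := by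
  rw [← Real.rpow_add Real.pi_pos, neg_div, neg_add_cancel, Real.rpow_zero]

instance : IsFiniteMeasure (gaussianMeasure d) := by
  constructor
  rw [gaussianMeasure, withDensity_apply _ MeasurableSet.univ, Measure.restrict_univ]
  exact (integrable_gauss.const_mul (π ^ (-(d:ℝ)/2))).lintegral_lt_top

lemma integrable_iff {f : E → ℝ} :
    Integrable f (gaussianMeasure d) ↔
      Integrable (fun x => f x * (π ^ (-(d:ℝ)/2) * rexp (-‖x‖ ^ 2))) volume := by
  rw [gaussianMeasure, integrable_withDensity_iff]
  · constructor
    · intro h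
      apply h.congr
      filter_upwards with x
      rw [ENNReal.toReal_ofReal (by positivity)]
    · intro h
      apply h.congr
      filter_upwards with x
      rw [ENNReal.toReal_ofReal (by positivity)]
  · exact (Continuous.measurable (by fun_prop)).ennreal_ofReal
  · filter_upwards with x using ofReal_lt_top

lemma integrable_weight {f : E → ℝ} (hf : Integrable f (gaussianMeasure d)) :
    Integrable (fun y : E => rexp (-‖y‖ ^ 2) * f y) volume := by
  have h := (integrable_iff.mp hf).const_mul (π ^ (-(d:ℝ)/2))⁻¹
  apply h.congr
  filter_upwards with x
  field_simp

lemma aesm_vol {f : E → ℝ} (hf : Integrable f (gaussianMeasure d)) :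
    AEStronglyMeasurable f volume := by
  have h := (integrable_iff.mp hf).aestronglyMeasurable
  have hc : Continuous fun x : E => (π ^ (-(d:ℝ)/2) * rexp (-‖x‖ ^ 2))⁻¹ := by
    apply Continuous.inv₀ (by fun_prop)
    intro x; positivity
  have := h.mul hc.aestronglyMeasurable
  apply this.congr
  filter_upwards with x
  have : π ^ (-(d:ℝ)/2) * rexp (-‖x‖ ^ 2) ≠ 0 := by positivity
  simp only [Pi.mul_apply]
  field_simp

/-- The Mehler kernel bound. -/
lemma kernel_le {s : ℝ} (hs : 0 < s) (x y : E) :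
    rexp (-‖y - rexp (-s) • x‖ ^ 2 / (1 - rexp (-2*s))) ≤ rexp (‖x‖ ^ 2) * rexp (-‖y‖ ^ 2) := by
  set a := rexp (-s) with ha
  have ha0 : 0 < a := Real.exp_pos _
  have ha1 : a < 1 := Real.exp_lt_one_iff.mpr (by linarith)
  have hden : 1 - rexp (-2*s) = 1 - a^2 := by
    rw [ha, ← Real.exp_nat_mul]; ring_nf
  have hden0 : 0 < 1 - a^2 := by nlinarith
  rw [hden, ← Real.exp_add]
  apply Real.exp_le_exp.mpr
  rw [div_le_iff₀ hden0]
  have h1 : ‖y - a • x‖ ^ 2 = ‖y‖ ^ 2 - 2 * (a * inner ℝ y x) + a^2 * ‖x‖ ^ 2 := by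
    rw [norm_sub_sq_real, real_inner_smul_right, norm_smul]
    simp [abs_of_pos ha0]
    ring
  have h2 : (0:ℝ) ≤ ‖a • y - x‖ ^ 2 := sq_nonneg _
  have h3 : ‖a • y - x‖ ^ 2 = a^2 * ‖y‖ ^ 2 - 2 * (a * inner ℝ y x) + ‖x‖ ^ 2 := by
    rw [norm_sub_sq_real, real_inner_smul_left, norm_smul]
    simp [abs_of_pos ha0]
    ring
  nlinarith [sq_nonneg (‖y‖^2), sq_nonneg a]

lemma integrable_kernel_mul {s : ℝ} (hs : 0 < s) {f : E → ℝ}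
    (hf : Integrable f (gaussianMeasure d)) (x : E) :
    Integrable (fun y : E =>
      rexp (-‖y - rexp (-s) • x‖ ^ 2 / (1 - rexp (-2*s))) * f y) volume := by
  apply Integrable.mono' (((integrable_weight hf.abs).const_mul (rexp (‖x‖^2))))
  · exact (Continuous.aestronglyMeasurable (by fun_prop)).mul (aesm_vol hf)
  · filter_upwards with y
    rw [Real.norm_eq_abs, abs_mul, abs_of_pos (Real.exp_pos _)]
    have h1 := kernel_le hs x y
    calc rexp (-‖y - rexp (-s) • x‖ ^ 2 / (1 - rexp (-2*s))) * |f y|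
        ≤ (rexp (‖x‖^2) * rexp (-‖y‖^2)) * |f y| := by
          apply mul_le_mul_of_nonneg_right h1 (abs_nonneg _)
      _ = rexp (‖x‖^2) * (rexp (-‖y‖^2) * |f y|) := by ring

lemma ou_sub {s : ℝ} (hs : 0 < s) {f g : E → ℝ}
    (hf : Integrable f (gaussianMeasure d)) (hg : Integrable g (gaussianMeasure d)) (x : E) :
    ouSemigroup s (f - g) x = ouSemigroup s f x - ouSemigroup s g x := by
  unfold ouSemigroup
  rw [← mul_sub, ← integral_sub (integrable_kernel_mul hs hf x) (integrable_kernel_mul hs hg x)]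
  congr 1
  apply integral_congr_ae
  filter_upwards with y
  simp [mul_sub]

lemma ou_abs_le {s : ℝ} (hs : 0 < s) {f : E → ℝ}
    (hf : Integrable f (gaussianMeasure d)) (x : E) :
    |ouSemigroup s f x| ≤ π ^ (-(d:ℝ)/2) * (1 - rexp (-2*s)) ^ (-(d:ℝ)/2) *
      (rexp (‖x‖ ^ 2) * ∫ y : E, rexp (-‖y‖ ^ 2) * |f y|) := by
  have hden0 : 0 < 1 - rexp (-2*s) := by
    have : rexp (-2*s) < 1 := Real.exp_lt_one_iff.mpr (by linarith)
    linarith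
  unfold ouSemigroup
  rw [abs_mul, abs_mul]
  rw [abs_of_pos gc_pos, abs_of_pos (Real.rpow_pos_of_pos hden0 _)]
  rw [mul_assoc, mul_assoc]
  apply mul_le_mul_of_nonneg_left _ gc_pos.le
  apply mul_le_mul_of_nonneg_left _ (Real.rpow_pos_of_pos hden0 _).le
  have h1 : |∫ y : E, rexp (-‖y - rexp (-s) • x‖ ^ 2 / (1 - rexp (-2*s))) * f y|
      ≤ ∫ y : E, rexp (-‖y - rexp (-s) • x‖ ^ 2 / (1 - rexp (-2*s))) * |f y| := by
    simpa [Real.norm_eq_abs, abs_mul, Real.abs_exp] using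
      norm_integral_le_integral_norm
        (fun y : E => rexp (-‖y - rexp (-s) • x‖ ^ 2 / (1 - rexp (-2*s))) * f y)
  refine h1.trans ?_
  have h2 : ∫ y : E, rexp (-‖y - rexp (-s) • x‖ ^ 2 / (1 - rexp (-2*s))) * |f y|
      ≤ ∫ y : E, rexp (‖x‖^2) * (rexp (-‖y‖^2) * |f y|) := by
    apply integral_mono (integrable_kernel_mul hs hf.abs x)
      ((integrable_weight hf.abs).const_mul _)
    intro y
    exact mul_le_mul_of_nonneg_right (kernel_le hs x y) (abs_nonneg _) |>.trans
      (le_of_eq (by ring))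
  refine h2.trans (le_of_eq ?_)
  exact integral_const_mul _ _

lemma ou_continuousAt {f : E → ℝ} (hf : Integrable f (gaussianMeasure d)) (x : E)
    {s₀ : ℝ} (hs₀ : 0 < s₀) :
    ContinuousAt (fun s => ouSemigroup s f x) s₀ := by
  have hmem : Set.Ioi (0:ℝ) ∈ 𝓝 s₀ := isOpen_Ioi.mem_nhds hs₀
  have hden : ∀ s : ℝ, 0 < s → 0 < 1 - rexp (-2*s) := by
    intro s hs
    have : rexp (-2*s) < 1 := Real.exp_lt_one_iff.mpr (by linarith)
    linarith
  unfold ouSemigroup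
  apply ContinuousAt.mul
  · apply ContinuousAt.mul continuousAt_const
    apply ContinuousAt.rpow_const (by fun_prop)
    exact Or.inl (hden s₀ hs₀).ne'
  · apply continuousAt_of_dominated (bound := fun y : E => rexp (‖x‖^2) * (rexp (-‖y‖^2) * |f y|))
    · filter_upwards [hmem] with s hs
      exact (Continuous.aestronglyMeasurable (by fun_prop)).mul (aesm_vol hf)
    · filter_upwards [hmem] with s hs
      filter_upwards with y
      rw [Real.norm_eq_abs, abs_mul, Real.abs_exp]
      exact mul_le_mul_of_nonneg_right (kernel_le hs x y) (abs_nonneg _) |>.trans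
        (le_of_eq (by ring))
    · exact (integrable_weight hf.abs).const_mul _
    · filter_upwards with y
      apply ContinuousAt.mul _ continuousAt_const
      apply Real.continuous_exp.continuousAt.comp
      apply ContinuousAt.div (by fun_prop) (by fun_prop)
      exact (hden s₀ hs₀).ne'

lemma one_sub_exp_bound {s : ℝ} (hs : 0 < s) :
    (1 - rexp (-2*s)) ^ (-(d:ℝ)/2) ≤ (1/(2*s) + 1) ^ ((d:ℝ)/2) := by
  have h2 : rexp (-2*s) ≤ 1 / (1 + 2*s) := by
    rw [le_div_iff₀ (by linarith : (0:ℝ) < 1 + 2*s)]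
    have h4 := Real.add_one_le_exp (2*s)
    calc rexp (-2*s) * (1 + 2*s) ≤ rexp (-2*s) * rexp (2*s) := by
          apply mul_le_mul_of_nonneg_left (by linarith) (Real.exp_pos _).le
      _ = 1 := by rw [← Real.exp_add]; ring_nf; exact Real.exp_zero
  have h1 : 2*s / (1 + 2*s) ≤ 1 - rexp (-2*s) := by
    have h3 : 2*s/(1+2*s) = 1 - 1/(1+2*s) := by field_simp; ring
    rw [h3]; linarith
  have hbase : (0:ℝ) < 2*s/(1+2*s) := by positivity
  have hA : 0 < 1 - rexp (-2*s) := lt_of_lt_of_le hbase h1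
  have e1 : (1 - rexp (-2*s)) ^ (-(d:ℝ)/2) = ((1 - rexp (-2*s))⁻¹) ^ ((d:ℝ)/2) := by
    rw [neg_div, Real.rpow_neg hA.le, ← Real.inv_rpow hA.le]
  rw [e1]
  apply Real.rpow_le_rpow (by positivity) _ (by positivity)
  have e2 : (1/(2*s) + 1) = (2*s/(1+2*s))⁻¹ := by
    rw [inv_div]
    field_simp
  rw [e2]
  exact inv_anti₀ hbase h1

/-- Integrability of the dominating function of the subordination integrand. -/
lemma aux_integrable (b : ℝ) (hb : 0 ≤ b) :
    IntegrableOn (fun u : ℝ => rexp (-u) / Real.sqrt u * (b*u+1) ^ ((d:ℝ)/2))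
      (Set.Ioi 0) volume := by
  have g1 : IntegrableOn (fun u : ℝ => rexp (-u) * u ^ ((1:ℝ)/2 - 1)) (Set.Ioi 0) volume :=
    Real.GammaIntegral_convergent (by norm_num)
  have g2 : IntegrableOn (fun u : ℝ => rexp (-u) * u ^ (((d:ℝ)+1)/2 - 1)) (Set.Ioi 0) volume :=
    Real.GammaIntegral_convergent (by positivity)
  set c : ℝ := (1+b) ^ ((d:ℝ)/2) * 2 ^ ((d:ℝ)/2) with hc
  have hc0 : 0 ≤ c := by positivity
  apply Integrable.mono' ((g1.const_mul c).add (g2.const_mul c))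
  · apply ContinuousOn.aestronglyMeasurable _ measurableSet_Ioi
    apply ContinuousOn.mul
    · apply ContinuousOn.div (by fun_prop) (by fun_prop)
      intro u hu
      exact (Real.sqrt_pos.mpr hu).ne'
    · apply ContinuousOn.rpow_const (by fun_prop)
      intro u hu
      left
      have : (0:ℝ) < u := hu
      positivity
  · rw [ae_restrict_iff' measurableSet_Ioi]
    filter_upwards with u hu
    have hu0 : (0:ℝ) < u := hu
    have hs0 : 0 < Real.sqrt u := Real.sqrt_pos.mpr hu0
    have key : (b*u+1) ^ ((d:ℝ)/2) ≤ c * (1 + u ^ ((d:ℝ)/2)) := by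
      have step1 : (b*u+1) ^ ((d:ℝ)/2) ≤ ((1+b)*(1+u)) ^ ((d:ℝ)/2) :=
        Real.rpow_le_rpow (by positivity) (by nlinarith) (by positivity)
      have step2 : ((1+b)*(1+u)) ^ ((d:ℝ)/2)
          = (1+b) ^ ((d:ℝ)/2) * (1+u) ^ ((d:ℝ)/2) :=
        Real.mul_rpow (by linarith) (by linarith)
      have h1b : (0:ℝ) < (1+b) ^ ((d:ℝ)/2) := Real.rpow_pos_of_pos (by linarith) _
      have step3 : (1+u) ^ ((d:ℝ)/2) ≤ 2 ^ ((d:ℝ)/2) * (1 + u ^ ((d:ℝ)/2)) := by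
        have h2pos : (0:ℝ) < 2 ^ ((d:ℝ)/2) := Real.rpow_pos_of_pos two_pos _
        have hupos : 0 ≤ u ^ ((d:ℝ)/2) := Real.rpow_nonneg hu0.le _
        rcases le_total u 1 with h | h
        · have h5 : (1+u) ^ ((d:ℝ)/2) ≤ (2:ℝ) ^ ((d:ℝ)/2) :=
            Real.rpow_le_rpow (by linarith) (by linarith) (by positivity)
          nlinarith
        · have h5 : (1+u) ^ ((d:ℝ)/2) ≤ (2*u) ^ ((d:ℝ)/2) :=
            Real.rpow_le_rpow (by linarith) (by linarith) (by positivity)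
          have h6 : (2*u) ^ ((d:ℝ)/2) = 2 ^ ((d:ℝ)/2) * u ^ ((d:ℝ)/2) :=
            Real.mul_rpow (by norm_num) hu0.le
          nlinarith
      calc (b*u+1) ^ ((d:ℝ)/2) ≤ (1+b) ^ ((d:ℝ)/2) * (1+u) ^ ((d:ℝ)/2) := by
            rw [← step2]; exact step1
        _ ≤ (1+b) ^ ((d:ℝ)/2) * (2 ^ ((d:ℝ)/2) * (1 + u ^ ((d:ℝ)/2))) :=
            mul_le_mul_of_nonneg_left step3 h1b.le
        _ = c * (1 + u ^ ((d:ℝ)/2)) := by rw [hc]; ring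
    simp only [Pi.add_apply]
    rw [Real.norm_eq_abs, abs_of_nonneg (by positivity)]
    have hexp : rexp (-u) / Real.sqrt u * (b*u+1) ^ ((d:ℝ)/2)
        ≤ rexp (-u) / Real.sqrt u * (c * (1 + u ^ ((d:ℝ)/2))) :=
      mul_le_mul_of_nonneg_left key (by positivity)
    refine hexp.trans (le_of_eq ?_)
    have e1 : rexp (-u) / Real.sqrt u = rexp (-u) * u ^ ((1:ℝ)/2 - 1) := by
      rw [Real.sqrt_eq_rpow, div_eq_mul_inv, ← Real.rpow_neg hu0.le]
      norm_num
    have e2 : rexp (-u) * u ^ ((1:ℝ)/2 - 1) * u ^ ((d:ℝ)/2)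
        = rexp (-u) * u ^ (((d:ℝ)+1)/2 - 1) := by
      rw [mul_assoc, ← Real.rpow_add hu0]
      ring_nf
    rw [e1]
    calc rexp (-u) * u ^ ((1:ℝ)/2 - 1) * (c * (1 + u ^ ((d:ℝ)/2)))
        = c * (rexp (-u) * u ^ ((1:ℝ)/2 - 1))
          + c * (rexp (-u) * u ^ ((1:ℝ)/2 - 1) * u ^ ((d:ℝ)/2)) := by ring
      _ = c * (rexp (-u) * u ^ ((1:ℝ)/2 - 1)) + c * (rexp (-u) * u ^ (((d:ℝ)+1)/2 - 1)) := by
          rw [e2]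

lemma u_integrand_integrableOn {t : ℝ} (ht : 0 < t) {f : E → ℝ}
    (hf : Integrable f (gaussianMeasure d)) (x : E) :
    IntegrableOn (fun u : ℝ => rexp (-u) / Real.sqrt u * ouSemigroup (t^2/(4*u)) f x)
      (Set.Ioi 0) volume := by
  set K := rexp (‖x‖^2) * ∫ y : E, rexp (-‖y‖^2) * |f y| with hK
  have hK0 : 0 ≤ K := by
    apply mul_nonneg (Real.exp_pos _).le
    apply integral_nonneg
    intro y
    positivity
  have hb : (0:ℝ) ≤ 2/t^2 := by positivity
  apply Integrable.mono' ((aux_integrable (2/t^2) hb).const_mul (π ^ (-(d:ℝ)/2) * K))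
  · apply ContinuousOn.aestronglyMeasurable _ measurableSet_Ioi
    apply ContinuousOn.mul
    · apply ContinuousOn.div (by fun_prop) (by fun_prop)
      intro u hu
      exact (Real.sqrt_pos.mpr hu).ne'
    · intro u hu
      have hu0 : (0:ℝ) < u := hu
      apply ContinuousAt.continuousWithinAt
      apply ContinuousAt.comp (ou_continuousAt hf x (by positivity))
      exact ContinuousAt.div continuousAt_const (by fun_prop) (by positivity)
  · rw [ae_restrict_iff' measurableSet_Ioi]
    filter_upwards with u hu
    have hu0 : (0:ℝ) < u := hu
    have hs : 0 < t^2/(4*u) := by positivity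
    have hsq : 0 < Real.sqrt u := Real.sqrt_pos.mpr hu0
    have harg : 1/(2*(t^2/(4*u))) + 1 = (2/t^2)*u + 1 := by
      field_simp
      ring
    have h5 : |ouSemigroup (t^2/(4*u)) f x| ≤ π ^ (-(d:ℝ)/2) * ((2/t^2)*u+1) ^ ((d:ℝ)/2) * K := by
      refine (ou_abs_le hs hf x).trans ?_
      rw [← hK]
      apply mul_le_mul_of_nonneg_right _ hK0
      apply mul_le_mul_of_nonneg_left _ gc_pos.le
      rw [← harg]
      exact one_sub_exp_bound hs
    rw [Real.norm_eq_abs, abs_mul, abs_of_nonneg (by positivity : (0:ℝ) ≤ rexp (-u) / Real.sqrt u)]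
    calc rexp (-u) / Real.sqrt u * |ouSemigroup (t^2/(4*u)) f x|
        ≤ rexp (-u) / Real.sqrt u * (π ^ (-(d:ℝ)/2) * ((2/t^2)*u+1) ^ ((d:ℝ)/2) * K) :=
          mul_le_mul_of_nonneg_left h5 (by positivity)
      _ = π ^ (-(d:ℝ)/2) * K * (rexp (-u) / Real.sqrt u * ((2/t^2)*u+1) ^ ((d:ℝ)/2)) := by ring

lemma poissonHermite_sub {t : ℝ} (ht : 0 < t) {f g : E → ℝ}
    (hf : Integrable f (gaussianMeasure d)) (hg : Integrable g (gaussianMeasure d)) (x : E) :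
    poissonHermite t (f - g) x = poissonHermite t f x - poissonHermite t g x := by
  unfold poissonHermite
  rw [← mul_sub, ← integral_sub (u_integrand_integrableOn ht hf x)
    (u_integrand_integrableOn ht hg x)]
  congr 1
  apply setIntegral_congr_fun measurableSet_Ioi
  intro u hu
  have hu0 : (0:ℝ) < u := hu
  have hs : 0 < t^2/(4*u) := by positivity
  show rexp (-u) / Real.sqrt u * ouSemigroup (t^2/(4*u)) (f - g) x = _
  rw [ou_sub hs hf hg x]
  ring

/-- Change of variables: Mehler representation of the OU semigroup. -/
lemma ou_rep {s : ℝ} (hs : 0 < s) (g : E → ℝ) (y : E) :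
    ouSemigroup s g y = π ^ (-(d:ℝ)/2) *
      ∫ z : E, rexp (-‖z‖ ^ 2) * g (rexp (-s) • y + Real.sqrt (1 - rexp (-2*s)) • z) := by
  have hden : 0 < 1 - rexp (-2*s) := by
    have : rexp (-2*s) < 1 := Real.exp_lt_one_iff.mpr (by linarith)
    linarith
  set σ := Real.sqrt (1 - rexp (-2*s)) with hσdef
  have hσ : 0 < σ := Real.sqrt_pos.mpr hden
  have hσ2 : σ^2 = 1 - rexp (-2*s) := Real.sq_sqrt hden.le
  set m := rexp (-s) • y with hm
  unfold ouSemigroup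
  have step1 : (∫ w : E, rexp (-‖w - m‖ ^ 2/(1 - rexp (-2*s))) * g w)
      = ∫ v : E, rexp (-‖v‖ ^ 2/(1 - rexp (-2*s))) * g (v + m) := by
    rw [← integral_add_right_eq_self
      (fun w : E => rexp (-‖w - m‖ ^ 2/(1 - rexp (-2*s))) * g w) m]
    congr 1
    ext v
    rw [add_sub_cancel_right]
  have hptw : ∀ z : E, rexp (-‖σ • z‖ ^ 2/(1 - rexp (-2*s))) * g (σ • z + m)
      = rexp (-‖z‖ ^ 2) * g (m + σ • z) := by
    intro z
    rw [add_comm (σ • z) m]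
    congr 2
    rw [norm_smul, Real.norm_eq_abs, abs_of_pos hσ, mul_pow, hσ2]
    rw [div_eq_iff hden.ne']
    ring
  have step2 : (∫ v : E, rexp (-‖v‖ ^ 2/(1 - rexp (-2*s))) * g (v + m))
      = σ ^ d * ∫ z : E, rexp (-‖z‖ ^ 2) * g (m + σ • z) := by
    have hcs := Measure.integral_comp_smul (volume (α := E))
      (fun v : E => rexp (-‖v‖ ^ 2/(1 - rexp (-2*s))) * g (v + m)) σ
    rw [finrank_euclideanSpace_fin] at hcs
    rw [abs_of_pos (by positivity), smul_eq_mul] at hcs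
    calc (∫ v : E, rexp (-‖v‖ ^ 2/(1 - rexp (-2*s))) * g (v + m))
        = σ ^ d * ((σ ^ d)⁻¹ * ∫ v : E, rexp (-‖v‖ ^ 2/(1 - rexp (-2*s))) * g (v + m)) := by
          field_simp
      _ = σ ^ d * ∫ z : E, rexp (-‖σ • z‖ ^ 2/(1 - rexp (-2*s))) * g (σ • z + m) := by
          rw [← hcs]
      _ = σ ^ d * ∫ z : E, rexp (-‖z‖ ^ 2) * g (m + σ • z) := by
          congr 1
          apply integral_congr_ae
          filter_upwards with z
          exact hptw z
  have hpow : (1 - rexp (-2*s)) ^ (-(d:ℝ)/2) * σ ^ d = 1 := by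
    have h1 : (σ:ℝ) ^ d = (1 - rexp (-2*s)) ^ ((d:ℝ)/2) := by
      rw [← Real.rpow_natCast σ d, hσdef, Real.sqrt_eq_rpow,
        ← Real.rpow_mul hden.le]
      congr 1
      ring
    rw [h1, ← Real.rpow_add hden, neg_div, neg_add_cancel, Real.rpow_zero]
  rw [step1, step2]
  calc π ^ (-(d:ℝ)/2) * (1 - rexp (-2*s)) ^ (-(d:ℝ)/2)
        * (σ ^ d * ∫ z : E, rexp (-‖z‖ ^ 2) * g (m + σ • z))
      = π ^ (-(d:ℝ)/2) * (((1 - rexp (-2*s)) ^ (-(d:ℝ)/2) * σ ^ d)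
          * ∫ z : E, rexp (-‖z‖ ^ 2) * g (m + σ • z)) := by ring
    _ = π ^ (-(d:ℝ)/2) * ∫ z : E, rexp (-‖z‖ ^ 2) * g (m + σ • z) := by
        rw [hpow, one_mul]

lemma integrable_gauss_comp (g : BoundedContinuousFunction E ℝ) (m : E) (σ : ℝ) :
    Integrable (fun z : E => rexp (-‖z‖ ^ 2) * g (m + σ • z)) volume := by
  apply Integrable.mono' (integrable_gauss.mul_const ‖g‖)
  · exact ((Real.continuous_exp.comp (by fun_prop)).mul
      (g.continuous.comp (by fun_prop))).aestronglyMeasurable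
  · filter_upwards with z
    rw [Real.norm_eq_abs, abs_mul, Real.abs_exp]
    refine mul_le_mul_of_nonneg_left ?_ (Real.exp_pos _).le
    rw [← Real.norm_eq_abs]
    exact g.norm_coe_le_norm _

lemma ou_bdd {s : ℝ} (hs : 0 < s) (g : BoundedContinuousFunction E ℝ) (y : E) :
    |ouSemigroup s (⇑g) y| ≤ ‖g‖ := by
  rw [ou_rep hs]
  rw [abs_mul, abs_of_pos gc_pos]
  have h1 : |∫ z : E, rexp (-‖z‖ ^ 2) * g (rexp (-s) • y + Real.sqrt (1 - rexp (-2*s)) • z)|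
      ≤ ∫ z : E, rexp (-‖z‖ ^ 2) * ‖g‖ := by
    refine le_trans ?_ (integral_mono
      (integrable_gauss_comp g (rexp (-s) • y) (Real.sqrt (1 - rexp (-2*s)))).abs
      (integrable_gauss.mul_const ‖g‖) ?_)
    · have hnn := norm_integral_le_integral_norm (μ := volume)
        (fun z : E => rexp (-‖z‖ ^ 2) * g (rexp (-s) • y + Real.sqrt (1 - rexp (-2*s)) • z))
      simpa only [Real.norm_eq_abs] using hnn
    · intro z
      show |_| ≤ _
      rw [abs_mul, Real.abs_exp]
      refine mul_le_mul_of_nonneg_left ?_ (Real.exp_pos _).le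
      rw [← Real.norm_eq_abs]
      exact g.norm_coe_le_norm _
  calc π ^ (-(d:ℝ)/2) *
        |∫ z : E, rexp (-‖z‖ ^ 2) * g (rexp (-s) • y + Real.sqrt (1 - rexp (-2*s)) • z)|
      ≤ π ^ (-(d:ℝ)/2) * ∫ z : E, rexp (-‖z‖ ^ 2) * ‖g‖ :=
        mul_le_mul_of_nonneg_left h1 gc_pos.le
    _ = ‖g‖ := by
        rw [integral_mul_const, integral_gauss, ← mul_assoc, gc_mul_gauss, one_mul]

lemma ou_tendsto (g : BoundedContinuousFunction E ℝ) (x : E) :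
    Tendsto (fun p : E × ℝ => ouSemigroup p.2 (⇑g) p.1)
      (𝓝 x ×ˢ 𝓝[>] (0:ℝ)) (𝓝 (g x)) := by
  have hev : ∀ᶠ p : E × ℝ in 𝓝 x ×ˢ 𝓝[>] (0:ℝ), p.2 ∈ Set.Ioi (0:ℝ) :=
    Filter.tendsto_snd.eventually eventually_mem_nhdsWithin
  have hL : (𝓝 x ×ˢ 𝓝[>] (0:ℝ)) ≤ 𝓝 ((x, (0:ℝ)) : E × ℝ) := by
    rw [nhds_prod_eq]
    exact Filter.prod_mono le_rfl nhdsWithin_le_nhds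
  have key : Tendsto (fun p : E × ℝ => π ^ (-(d:ℝ)/2) *
      ∫ z : E, rexp (-‖z‖ ^ 2) * g (rexp (-p.2) • p.1 + Real.sqrt (1 - rexp (-2*p.2)) • z))
      (𝓝 x ×ˢ 𝓝[>] (0:ℝ)) (𝓝 (g x)) := by
    have h0 : (g x : ℝ) = π ^ (-(d:ℝ)/2) * ∫ z : E, rexp (-‖z‖ ^ 2) * g x := by
      rw [integral_mul_const, integral_gauss, ← mul_assoc, gc_mul_gauss, one_mul]
    rw [h0]
    apply Filter.Tendsto.const_mul
    apply tendsto_integral_filter_of_dominated_convergence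
      (bound := fun z : E => rexp (-‖z‖ ^ 2) * ‖g‖)
    · filter_upwards with p
      exact ((Real.continuous_exp.comp (by fun_prop)).mul
        (g.continuous.comp (by fun_prop))).aestronglyMeasurable
    · filter_upwards with p
      filter_upwards with z
      rw [Real.norm_eq_abs, abs_mul, Real.abs_exp]
      refine mul_le_mul_of_nonneg_left ?_ (Real.exp_pos _).le
      rw [← Real.norm_eq_abs]
      exact g.norm_coe_le_norm _
    · exact integrable_gauss.mul_const ‖g‖
    · filter_upwards with z
      apply Filter.Tendsto.const_mul
      have hφ : Continuous (fun p : E × ℝ =>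
          rexp (-p.2) • p.1 + Real.sqrt (1 - rexp (-2*p.2)) • z) := by fun_prop
      have hφ0 : Tendsto (fun p : E × ℝ =>
          rexp (-p.2) • p.1 + Real.sqrt (1 - rexp (-2*p.2)) • z)
          (𝓝 ((x, (0:ℝ)) : E × ℝ)) (𝓝 x) := by
        apply hφ.tendsto' _ _
        simp
      exact (g.continuous.tendsto x).comp (hφ0.mono_left hL)
  apply key.congr'
  filter_upwards [hev] with p hp
  exact (ou_rep hp (⇑g) p.1).symm

lemma integrable_half : IntegrableOn (fun u : ℝ => rexp (-u) / Real.sqrt u)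
    (Set.Ioi 0) volume := by
  apply (Real.GammaIntegral_convergent (by norm_num : (0:ℝ) < 1/2)).congr_fun _
    measurableSet_Ioi
  intro u hu
  have hu0 : (0:ℝ) < u := hu
  show rexp (-u) * u ^ ((1:ℝ)/2 - 1) = rexp (-u) / Real.sqrt u
  rw [Real.sqrt_eq_rpow, eq_div_iff (Real.rpow_pos_of_pos hu0 _).ne', mul_assoc,
    ← Real.rpow_add hu0]
  norm_num

lemma integral_half : ∫ u in Set.Ioi (0:ℝ), rexp (-u) / Real.sqrt u = Real.sqrt π := by
  have h := Real.Gamma_eq_integral (by norm_num : (0:ℝ) < 1/2)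
  rw [Real.Gamma_one_half_eq] at h
  rw [h]
  apply setIntegral_congr_fun measurableSet_Ioi
  intro u hu
  have hu0 : (0:ℝ) < u := hu
  show rexp (-u) / Real.sqrt u = rexp (-u) * u ^ ((1:ℝ)/2 - 1)
  symm
  rw [Real.sqrt_eq_rpow, eq_div_iff (Real.rpow_pos_of_pos hu0 _).ne', mul_assoc,
    ← Real.rpow_add hu0]
  norm_num

set_option maxHeartbeats 1000000 in
lemma ph_tendsto (g : BoundedContinuousFunction E ℝ)
    (hg : Integrable (⇑g) (gaussianMeasure d)) (x : E) :
    Tendsto (fun q : E × ℝ => poissonHermite q.2 (⇑g) q.1)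
      (𝓝 x ×ˢ 𝓝[>] (0:ℝ)) (𝓝 (g x)) := by
  have hev : ∀ᶠ q : E × ℝ in 𝓝 x ×ˢ 𝓝[>] (0:ℝ), q.2 ∈ Set.Ioi (0:ℝ) :=
    Filter.tendsto_snd.eventually eventually_mem_nhdsWithin
  have hsπ : (0:ℝ) < Real.sqrt π := Real.sqrt_pos.mpr Real.pi_pos
  have key : Tendsto (fun q : E × ℝ => (1/Real.sqrt π) *
      ∫ u in Set.Ioi (0:ℝ), rexp (-u)/Real.sqrt u * ouSemigroup (q.2^2/(4*u)) (⇑g) q.1)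
      (𝓝 x ×ˢ 𝓝[>] (0:ℝ)) (𝓝 ((1/Real.sqrt π) * (Real.sqrt π * g x))) := by
    apply Filter.Tendsto.const_mul
    have lim_eq : Real.sqrt π * (g x : ℝ)
        = ∫ u in Set.Ioi (0:ℝ), rexp (-u)/Real.sqrt u * g x := by
      rw [show (∫ u in Set.Ioi (0:ℝ), rexp (-u)/Real.sqrt u * g x)
        = (∫ u in Set.Ioi (0:ℝ), rexp (-u)/Real.sqrt u) * g x from integral_mul_const _ _,
        integral_half]
    rw [lim_eq]
    apply tendsto_integral_filter_of_dominated_convergence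
      (bound := fun u => rexp (-u)/Real.sqrt u * ‖g‖)
    · filter_upwards [hev] with q hq
      apply ContinuousOn.aestronglyMeasurable _ measurableSet_Ioi
      apply ContinuousOn.mul
      · apply ContinuousOn.div (by fun_prop) (by fun_prop)
        intro u hu
        exact (Real.sqrt_pos.mpr hu).ne'
      · intro u hu
        have hu0 : (0:ℝ) < u := hu
        have hq0 : (0:ℝ) < q.2 := hq
        apply ContinuousAt.continuousWithinAt
        apply ContinuousAt.comp (ou_continuousAt hg q.1 (by positivity))
        exact ContinuousAt.div continuousAt_const (by fun_prop) (by positivity)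
    · filter_upwards [hev] with q hq
      rw [ae_restrict_iff' measurableSet_Ioi]
      filter_upwards with u hu
      have hu0 : (0:ℝ) < u := hu
      have hq0 : (0:ℝ) < q.2 := hq
      have hs : 0 < q.2^2/(4*u) := by positivity
      rw [Real.norm_eq_abs, abs_mul, abs_of_nonneg
        (by positivity : (0:ℝ) ≤ rexp (-u) / Real.sqrt u)]
      exact mul_le_mul_of_nonneg_left (ou_bdd hs g q.1) (by positivity)
    · exact integrable_half.mul_const ‖g‖
    · rw [ae_restrict_iff' measurableSet_Ioi]
      filter_upwards with u hu
      have hu0 : (0:ℝ) < u := hu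
      have hmap : Tendsto (fun q : E × ℝ => ((q.1, q.2^2/(4*u)) : E × ℝ))
          (𝓝 x ×ˢ 𝓝[>] (0:ℝ)) (𝓝 x ×ˢ 𝓝[>] (0:ℝ)) := by
        apply Filter.Tendsto.prodMk Filter.tendsto_fst
        rw [tendsto_nhdsWithin_iff]
        refine ⟨?_, ?_⟩
        · have hc : Continuous (fun r : ℝ => r^2/(4*u)) := by fun_prop
          have h2 : Tendsto (fun r : ℝ => r^2/(4*u)) (𝓝 0) (𝓝 0) :=
            hc.tendsto' 0 0 (by norm_num)
          exact h2.comp (Filter.tendsto_snd.mono_right nhdsWithin_le_nhds)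
        · filter_upwards [hev] with q hq
          have hq0 : (0:ℝ) < q.2 := hq
          exact Set.mem_Ioi.mpr (by positivity)
      have hcomp0 := Filter.Tendsto.comp (ou_tendsto g x) hmap
      have hcomp : Tendsto (fun q : E × ℝ => ouSemigroup (q.2^2/(4*u)) (⇑g) q.1)
          (𝓝 x ×ˢ 𝓝[>] (0:ℝ)) (𝓝 (g x)) := hcomp0.congr (fun q => rfl)
      show Tendsto (fun q : E × ℝ => rexp (-u)/Real.sqrt u * ouSemigroup (q.2^2/(4*u)) (⇑g) q.1)
          (𝓝 x ×ˢ 𝓝[>] (0:ℝ)) (𝓝 (rexp (-u)/Real.sqrt u * g x))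
      exact Filter.Tendsto.const_mul (rexp (-u)/Real.sqrt u) hcomp
  rw [show (g x : ℝ) = (1/Real.sqrt π) * (Real.sqrt π * g x) from by field_simp]
  unfold poissonHermite
  exact key

lemma filter_eq (x : E) :
    𝓝 ((x, (0:ℝ)) : E × ℝ) ⊓ 𝓟 {q : E × ℝ | 0 < q.2} = 𝓝 x ×ˢ 𝓝[>] (0:ℝ) := by
  rw [nhds_prod_eq,
    show {q : E × ℝ | 0 < q.2} = (Set.univ : Set E) ×ˢ Set.Ioi (0:ℝ) from by
      ext q; simp [Set.mem_prod],
    ← Filter.prod_principal_principal, Filter.prod_inf_prod, Filter.principal_univ, inf_top_eq]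
  rfl

/-- The key vanishing-measure estimate for the bad set at scale `ε`. -/
lemma bad_set_null (C : ℝ≥0)
    (hweak : ∀ g : E → ℝ, Integrable g (gaussianMeasure d) →
      ∀ lam : ℝ, 0 < lam →
        gaussianMeasure d {x | ENNReal.ofReal lam < phNTMaximal g x} ≤
          (C : ℝ≥0∞) * eLpNorm g 1 (gaussianMeasure d) / ENNReal.ofReal lam)
    {f : E → ℝ} (hf1 : MemLp f 1 (gaussianMeasure d)) {ε : ℝ} (hε : 0 < ε) :
    gaussianMeasure d {x | ¬ ∀ᶠ q : E × ℝ in 𝓝 (x, (0:ℝ)) ⊓ 𝓟 (gaussianCone x),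
      |poissonHermite q.2 f q.1 - f x| < ε} = 0 := by
  set γ := gaussianMeasure d with hγ
  have hfi : Integrable f γ := memLp_one_iff_integrable.mp hf1
  set e : ℝ≥0∞ := ENNReal.ofReal (ε/3) with he
  have he0 : e ≠ 0 := (ENNReal.ofReal_pos.mpr (by positivity)).ne'
  set K : ℝ≥0∞ := ((C : ℝ≥0∞)+1) / e with hK
  have hKne : K ≠ ⊤ := by
    rw [hK]
    exact (ENNReal.div_lt_top (by simp) he0).ne
  set S : Set E := {x | ¬ ∀ᶠ q : E × ℝ in 𝓝 (x, (0:ℝ)) ⊓ 𝓟 (gaussianCone x),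
    |poissonHermite q.2 f q.1 - f x| < ε} with hS
  have hall : ∀ δ : ℝ≥0∞, δ ≠ 0 → γ S ≤ K * δ := by
    intro δ hδ
    obtain ⟨g₀, hgle, hgmem⟩ :=
      hf1.exists_boundedContinuous_eLpNorm_sub_le ENNReal.one_ne_top hδ
    have hgint : Integrable (⇑g₀) γ := memLp_one_iff_integrable.mp hgmem
    have hhint : Integrable (f - ⇑g₀) γ := hfi.sub hgint
    set bad₁ : Set E := {x | ENNReal.ofReal (ε/3) < phNTMaximal (f - ⇑g₀) x} with hbad₁
    set bad₂ : Set E := {x | ε/3 < |f x - g₀ x|} with hbad₂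
    have hincl : S ⊆ bad₁ ∪ bad₂ := by
      intro x hx
      by_contra hmem
      rw [Set.mem_union, not_or] at hmem
      obtain ⟨hx1, hx2⟩ := hmem
      apply hx
      have h1 : ∀ q ∈ gaussianCone x, |poissonHermite q.2 (f - ⇑g₀) q.1| ≤ ε/3 := by
        intro q hq
        have hb : ENNReal.ofReal |poissonHermite q.2 (f - ⇑g₀) q.1|
            ≤ phNTMaximal (f - ⇑g₀) x :=
          le_iSup₂ (f := fun (p : E × ℝ) (_ : p ∈ gaussianCone x) =>
            ENNReal.ofReal |poissonHermite p.2 (f - ⇑g₀) p.1|) q hq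
        have hb2 := hb.trans (not_lt.mp hx1)
        exact (ENNReal.ofReal_le_ofReal_iff (by positivity)).mp hb2
      have h2 : |f x - g₀ x| ≤ ε/3 := not_lt.mp hx2
      have hle : 𝓝 ((x,(0:ℝ)) : E × ℝ) ⊓ 𝓟 (gaussianCone x) ≤ 𝓝 x ×ˢ 𝓝[>] (0:ℝ) := by
        rw [← filter_eq x]
        exact inf_le_inf_left _ (Filter.principal_mono.mpr (fun q hq => hq.1))
      have hg_conv := (ph_tendsto g₀ hgint x).mono_left hle
      have hev1 : ∀ᶠ q : E × ℝ in 𝓝 (x, (0:ℝ)) ⊓ 𝓟 (gaussianCone x),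
          |poissonHermite q.2 (⇑g₀) q.1 - g₀ x| < ε/3 := by
        have := Metric.tendsto_nhds.mp hg_conv (ε/3) (by positivity)
        filter_upwards [this] with q hq
        rwa [Real.dist_eq] at hq
      have hev2 : ∀ᶠ q : E × ℝ in 𝓝 (x, (0:ℝ)) ⊓ 𝓟 (gaussianCone x),
          q ∈ gaussianCone x :=
        Filter.eventually_inf_principal.mpr (Filter.Eventually.of_forall (fun q hq => hq))
      filter_upwards [hev1, hev2] with q hq1 hq2
      have hq0 : 0 < q.2 := hq2.1
      have hlin := poissonHermite_sub hq0 hfi hgint q.1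
      have h3 := h1 q hq2
      rw [hlin] at h3
      have htri1 := abs_sub_le (poissonHermite q.2 f q.1) (poissonHermite q.2 (⇑g₀) q.1) (f x)
      have htri2 := abs_sub_le (poissonHermite q.2 (⇑g₀) q.1) (g₀ x) (f x)
      have habs : |g₀ x - f x| = |f x - g₀ x| := abs_sub_comm _ _
      linarith
    have hb1 : γ bad₁ ≤ (C : ℝ≥0∞) * δ / e := by
      refine (hweak (f - ⇑g₀) hhint (ε/3) (by positivity)).trans ?_
      rw [← he]
      exact ENNReal.div_le_div_right (mul_le_mul_right hgle _) e
    have hb2 : γ bad₂ ≤ δ / e := by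
      have hsub : bad₂ ⊆ {x | e ≤ (‖(f - ⇑g₀) x‖₊ : ℝ≥0∞)} := by
        intro x hx
        have hx' : ε/3 < |f x - g₀ x| := hx
        have : ENNReal.ofReal (ε/3) ≤ ENNReal.ofReal |f x - g₀ x| :=
          ENNReal.ofReal_le_ofReal hx'.le
        rwa [show ENNReal.ofReal |f x - g₀ x| = (‖(f - ⇑g₀) x‖₊ : ℝ≥0∞) from by
          rw [Pi.sub_apply, ← Real.norm_eq_abs]; exact ofReal_norm _] at this
      refine (measure_mono hsub).trans ?_
      refine (meas_ge_le_lintegral_div hhint.aestronglyMeasurable.enorm he0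
        ENNReal.ofReal_ne_top).trans ?_
      rw [← eLpNorm_one_eq_lintegral_enorm]
      exact ENNReal.div_le_div_right hgle e
    calc γ S ≤ γ (bad₁ ∪ bad₂) := measure_mono hincl
      _ ≤ γ bad₁ + γ bad₂ := measure_union_le _ _
      _ ≤ (C : ℝ≥0∞) * δ / e + δ / e := add_le_add hb1 hb2
      _ = (((C : ℝ≥0∞) + 1) * δ) / e := by
          rw [ENNReal.div_add_div_same, add_mul, one_mul]
      _ = K * δ := by
          rw [hK, div_eq_mul_inv, div_eq_mul_inv, mul_right_comm]
  have htend : Tendsto (fun n : ℕ => K * ENNReal.ofReal (1/(n+1))) atTop (𝓝 0) := by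
    have h0 : Tendsto (fun n : ℕ => ENNReal.ofReal (1/(n+1))) atTop (𝓝 (ENNReal.ofReal 0)) :=
      ENNReal.tendsto_ofReal tendsto_one_div_add_atTop_nhds_zero_nat
    have := ENNReal.Tendsto.const_mul h0 (Or.inr hKne)
    simpa using this
  have hle0 : γ S ≤ 0 :=
    ge_of_tendsto' htend (fun n => hall _ (ENNReal.ofReal_pos.mpr (by positivity)).ne')
  exact le_antisymm hle0 (zero_le)

end PHproof

/-- Non-tangential a.e. convergence of the Poisson-Hermite semigroup for
`f ∈ L^p(γ_d)`, `1 ≤ p < ∞`, assuming the non-tangential maximal function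
`𝒫*_γ` is of weak type `(1,1)` with respect to `γ_d`. -/
theorem poissonHermite_nontangential_convergence {d : ℕ} (C : ℝ≥0)
    (hweak : ∀ g : EuclideanSpace ℝ (Fin d) → ℝ, Integrable g (gaussianMeasure d) →
      ∀ lam : ℝ, 0 < lam →
        gaussianMeasure d {x | ENNReal.ofReal lam < phNTMaximal g x} ≤
          (C : ℝ≥0∞) * eLpNorm g 1 (gaussianMeasure d) / ENNReal.ofReal lam)
    (p : ℝ≥0∞) (hp1 : 1 ≤ p) (hp : p < ⊤)
    (f : EuclideanSpace ℝ (Fin d) → ℝ) (hf : MemLp f p (gaussianMeasure d)) :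
    ∀ᵐ x ∂(gaussianMeasure d),
      Tendsto (fun q : (EuclideanSpace ℝ (Fin d)) × ℝ => poissonHermite q.2 f q.1)
        (𝓝 (x, (0:ℝ)) ⊓ Filter.principal (gaussianCone x)) (𝓝 (f x)) := by
  have hf1 : MemLp f 1 (gaussianMeasure d) := hf.mono_exponent hp1
  rw [ae_iff]
  have hsub : {x : EuclideanSpace ℝ (Fin d) |
      ¬ Tendsto (fun q : (EuclideanSpace ℝ (Fin d)) × ℝ => poissonHermite q.2 f q.1)
        (𝓝 (x, (0:ℝ)) ⊓ Filter.principal (gaussianCone x)) (𝓝 (f x))} ⊆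
      ⋃ n : ℕ, {x : EuclideanSpace ℝ (Fin d) |
        ¬ ∀ᶠ q : (EuclideanSpace ℝ (Fin d)) × ℝ in
          𝓝 (x, (0:ℝ)) ⊓ 𝓟 (gaussianCone x),
          |poissonHermite q.2 f q.1 - f x| < 1/((n:ℝ)+1)} := by
    intro x hx
    simp only [Set.mem_setOf_eq] at hx
    rw [Metric.tendsto_nhds] at hx
    push_neg at hx
    obtain ⟨ε, hε, hxε⟩ := hx
    obtain ⟨n, hn⟩ := exists_nat_one_div_lt hε
    apply Set.mem_iUnion.mpr
    refine ⟨n, ?_⟩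
    intro hev
    apply hxε
    have : (1:ℝ)/((n:ℝ)+1) < ε := by exact_mod_cast hn
    filter_upwards [hev] with q hq
    rw [Real.dist_eq]
    linarith
  refine measure_mono_null hsub ?_
  apply measure_iUnion_null
  intro n
  exact PHproof.bad_set_null C hweak hf1 (by positivity)
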